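/- In the lamplighter group L₂ = ℤ₂ ≀ ℤ with generating set {a, t}, for any j with 0 < j < n, the word t^{n+j} a t^{−2n} a t^{n} is not geodesic: the element it represents has word length 4n − j + 2 < 4n + j + 2, realized by the word t^{−n+j} a t^{2n} a t^{−n}. -/

import Mathlib

open scoped commutatorElement

/-- Relators for the lamplighter group `L_m = ℤ_m ≀ ℤ` in the wreath product
presentation `⟨a, t | a^m, [t^i a t^{-i}, t^j a t^{-j}]⟩`, where `a` is encoded
by `true` and `t` by `false`. -/
def lampRels (m : ℕ) : Set (FreeGroup Bool) :=
  {FreeGroup.of true ^ m} ∪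
  {r | ∃ i j : ℤ,
    r = ⁅FreeGroup.of false ^ i * FreeGroup.of true * FreeGroup.of false ^ (-i),
        FreeGroup.of false ^ j * FreeGroup.of true * FreeGroup.of false ^ (-j)⁆}

/-- The lamplighter group `L_m = ℤ_m ≀ ℤ`. -/
abbrev Lamp (m : ℕ) := PresentedGroup (lampRels m)

/-- The generator `a` of `L_m`. -/
noncomputable def la (m : ℕ) : Lamp m := PresentedGroup.of true

/-- The generator `t` of `L_m`. -/
noncomputable def lt (m : ℕ) : Lamp m := PresentedGroup.of false

/-- Word length of `g` with respect to the generating set `S` (and inverses):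
the least length of a list of elements of `S ∪ S⁻¹` with product `g`. -/
noncomputable def wordLength {G : Type*} [Group G] (S : Set G) (g : G) : ℕ :=
  sInf {n | ∃ l : List G, (∀ x ∈ l, x ∈ S ∨ x⁻¹ ∈ S) ∧ l.length = n ∧ l.prod = g}

/-!
The upper bound is a rewriting: the element is `(tⁿ⁺ʲ a t⁻ⁿ⁻ʲ)(tʲ⁻ⁿ a tⁿ⁻ʲ) tʲ`, the first two
factors are commuting lamps, and lighting them in the other order gives the shorter word.

For the lower bound, `L₂` acts on configurations (finite set of lit lamps, cursor position), `a`
toggling the lamp under the cursor and `t` moving the cursor. The Cleary–Taback quantity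
`#lamps + 2 · (length of the smallest interval containing the lamps, 0 and the cursor) − |cursor|`
vanishes on the empty configuration and changes by at most one under each generator, so its value
at `g • (∅, 0)` bounds the word length of `g` from below. For our element it is `4n − j + 2`.
-/

open Finset Equiv
open scoped symmDiff

section WordLength

variable {G : Type*} [Group G] {S : Set G}

theorem le_add_length_of_mul_le_add_one (F : G → ℤ)
    (hF : ∀ s, s ∈ S ∨ s⁻¹ ∈ S → ∀ g, F (s * g) ≤ F g + 1) {l : List G}
    (hl : ∀ s ∈ l, s ∈ S ∨ s⁻¹ ∈ S) : F l.prod ≤ F 1 + l.length := by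
  induction l with
  | nil => simp
  | cons s l ih =>
    rw [List.prod_cons, List.length_cons]
    have hs := hF s (hl s List.mem_cons_self) l.prod
    have hrest := ih fun x hx => hl x (List.mem_cons_of_mem s hx)
    push_cast
    omega

theorem wordLength_eq_of_forall_le {g : G} {N : ℕ} (l : List G)
    (hl : ∀ s ∈ l, s ∈ S ∨ s⁻¹ ∈ S) (hlen : l.length = N) (hprod : l.prod = g)
    (hmin : ∀ l' : List G, (∀ s ∈ l', s ∈ S ∨ s⁻¹ ∈ S) → l'.prod = g → N ≤ l'.length) :
    wordLength S g = N :=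
  le_antisymm (Nat.sInf_le ⟨l, hl, hlen, hprod⟩) <|
    le_csInf ⟨N, l, hl, hlen, hprod⟩ fun _ ⟨l', hl', hlen', hprod'⟩ => hlen' ▸ hmin l' hl' hprod'

end WordLength

theorem pumped_word_prod {G : Type*} [Group G] (a t : G) (n j : ℕ) :
    (List.replicate (n + j) t ++ [a] ++ List.replicate (2 * n) t⁻¹ ++ [a] ++
      List.replicate n t).prod =
    (t ^ (n + j : ℤ) * a * t ^ (-(n + j : ℤ))) * (t ^ (j - n : ℤ) * a * t ^ (-(j - n : ℤ))) *
      t ^ (j : ℤ) := by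
  simp only [List.prod_append, List.prod_replicate, List.prod_singleton,
    ← zpow_natCast]
  push_cast
  group

theorem shortened_word_prod {G : Type*} [Group G] (a t : G) {n j : ℕ} (hjn : j ≤ n) :
    (List.replicate (n - j) t⁻¹ ++ [a] ++ List.replicate (2 * n) t ++ [a] ++
      List.replicate n t⁻¹).prod =
    (t ^ (j - n : ℤ) * a * t ^ (-(j - n : ℤ))) * (t ^ (n + j : ℤ) * a * t ^ (-(n + j : ℤ))) *
      t ^ (j : ℤ) := by
  simp only [List.prod_append, List.prod_replicate, List.prod_singleton,
    ← zpow_natCast]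
  push_cast [hjn]
  group

noncomputable def lampAt (m : ℕ) (i : ℤ) : Lamp m := lt m ^ i * la m * lt m ^ (-i)

theorem lampAt_commute (m : ℕ) (i j : ℤ) : Commute (lampAt m i) (lampAt m j) := by
  have hrel := PresentedGroup.one_of_mem (rels := lampRels m) (Or.inr ⟨i, j, rfl⟩)
  simp only [map_commutatorElement, map_mul, map_zpow] at hrel
  exact commutatorElement_eq_one_iff_commute.mp hrel

def toggleAt (i : ℤ) : Perm (Finset ℤ × ℤ) :=
  Function.Involutive.toPerm (fun c => (c.1 ∆ {c.2 - i}, c.2)) fun c => by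
    simp [symmDiff_symmDiff_cancel_right]

theorem toggleAt_apply (i : ℤ) (c : Finset ℤ × ℤ) :
    toggleAt i c = (c.1 ∆ {c.2 - i}, c.2) := rfl

theorem toggleAt_mul_self (i : ℤ) : toggleAt i * toggleAt i = 1 :=
  Perm.ext fun c => by simp [toggleAt_apply, symmDiff_symmDiff_cancel_right]

theorem toggleAt_commute (i j : ℤ) : Commute (toggleAt i) (toggleAt j) :=
  Perm.ext fun c => by simp [toggleAt_apply, symmDiff_right_comm]

def moveCursor : Perm (Finset ℤ × ℤ) := Equiv.prodCongr (Equiv.refl _) (Equiv.addRight 1)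

theorem moveCursor_zpow_apply (i : ℤ) (c : Finset ℤ × ℤ) :
    (moveCursor ^ i) c = (c.1, c.2 + i) := by
  induction i using Int.induction_on generalizing c with
  | zero => simp
  | succ i ih =>
    rw [zpow_add_one, Perm.mul_apply, ih]
    simp [moveCursor]
    ring
  | pred i ih =>
    rw [zpow_sub_one, Perm.mul_apply, ih]
    simp [moveCursor, Perm.inv_def]
    ring

theorem moveCursor_zpow_conj_toggleAt_zero (i : ℤ) :
    moveCursor ^ i * toggleAt 0 * moveCursor ^ (-i) = toggleAt i := by
  ext c : 1
  rw [Perm.mul_apply, Perm.mul_apply, moveCursor_zpow_apply, moveCursor_zpow_apply]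
  simp [toggleAt_apply, sub_eq_add_neg]

def lampGen : Bool → Perm (Finset ℤ × ℤ)
  | true => toggleAt 0
  | false => moveCursor

theorem lift_lampGen_of_mem_lampRels :
    ∀ r ∈ lampRels 2, FreeGroup.lift lampGen r = 1 := by
  rintro r (hr | ⟨i, j, rfl⟩)
  · rw [Set.mem_singleton_iff.mp hr, map_pow, FreeGroup.lift_apply_of, pow_two]
    exact toggleAt_mul_self 0
  · simp only [map_commutatorElement, map_mul, map_zpow, FreeGroup.lift_apply_of, lampGen,
      moveCursor_zpow_conj_toggleAt_zero]
    exact commutatorElement_eq_one_iff_commute.mpr (toggleAt_commute i j)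

noncomputable def lampPerm : Lamp 2 →* Perm (Finset ℤ × ℤ) :=
  PresentedGroup.toGroup lift_lampGen_of_mem_lampRels

theorem lampPerm_la : lampPerm (la 2) = toggleAt 0 := PresentedGroup.toGroup.of _

theorem lampPerm_lt : lampPerm (lt 2) = moveCursor := PresentedGroup.toGroup.of _

theorem lampPerm_lampAt (i : ℤ) : lampPerm (lampAt 2 i) = toggleAt i := by
  rw [lampAt, map_mul, map_mul, map_zpow, map_zpow, lampPerm_la, lampPerm_lt,
    moveCursor_zpow_conj_toggleAt_zero]

theorem lampPerm_lampAt_mul_lampAt_mul_zpow_apply (p q k : ℤ) :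
    lampPerm (lampAt 2 p * lampAt 2 q * lt 2 ^ k) (∅, 0) = ({k - q} ∆ {k - p}, k) := by
  simp [Perm.mul_apply, lampPerm_lampAt, lampPerm_lt, moveCursor_zpow_apply, toggleAt_apply]

def lampHull (c : Finset ℤ × ℤ) : Finset ℤ := insert c.2 (insert 0 c.1)

def lampCost (c : Finset ℤ × ℤ) : ℤ :=
  #c.1 + 2 * ((lampHull c).max' (insert_nonempty _ _) - (lampHull c).min' (insert_nonempty _ _))
    - |c.2|

theorem lampCost_empty_zero : lampCost (∅, 0) = 0 := by
  simp [lampCost, lampHull]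

theorem lampCost_toggleAt_zero_le (c : Finset ℤ × ℤ) :
    lampCost (toggleAt 0 c) ≤ lampCost c + 1 := by
  have hhull : lampHull (toggleAt 0 c) = lampHull c := by
    ext x
    simp only [lampHull, toggleAt_apply, sub_zero, mem_insert, mem_symmDiff, mem_singleton]
    tauto
  have hcard : #(c.1 ∆ {c.2}) ≤ #c.1 + 1 :=
    (card_le_card symmDiff_le_sup).trans (card_union_le _ _)
  simp only [lampCost, hhull]
  simp only [toggleAt_apply, sub_zero]
  omega

theorem lampCost_le_add_abs_sub (s : Finset ℤ) (k k' : ℤ) :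
    lampCost (s, k') ≤ lampCost (s, k) + |k' - k| := by
  have hmin := (insert 0 s).min'_le 0 (mem_insert_self _ _)
  have hmax := (insert 0 s).le_max' 0 (mem_insert_self _ _)
  simp only [lampCost, lampHull, max'_insert _ _ (insert_nonempty _ _),
    min'_insert _ _ (insert_nonempty _ _), abs_eq_max_neg]
  omega

theorem lampCost_symmDiff_pair {p q k : ℤ} (hqp : q < p) (hq : q ≤ min 0 k) (hp : max 0 k ≤ p) :
    lampCost ({p} ∆ {q}, k) = 2 * (p - q) + 2 - |k| := by
  have hpair : ({p} ∆ {q} : Finset ℤ) = {p, q} := by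
    rw [(disjoint_singleton.mpr hqp.ne').symmDiff_eq_sup, sup_eq_union, insert_eq]
  simp only [lampCost, lampHull, hpair, card_pair hqp.ne', max'_insert _ _ (insert_nonempty _ _),
    min'_insert _ _ (insert_nonempty _ _), max'_insert _ _ (singleton_nonempty _),
    min'_insert _ _ (singleton_nonempty _), max'_singleton, min'_singleton]
  omega

theorem lampCost_lampPerm_le {s : Lamp 2}
    (hs : s ∈ ({la 2, lt 2} : Set (Lamp 2)) ∨ s⁻¹ ∈ ({la 2, lt 2} : Set (Lamp 2)))
    (c : Finset ℤ × ℤ) : lampCost (lampPerm s c) ≤ lampCost c + 1 := by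
  have hcursor (e : ℤ) (he : |e| = 1) : lampCost ((moveCursor ^ e) c) ≤ lampCost c + 1 := by
    have h := lampCost_le_add_abs_sub c.1 c.2 (c.2 + e)
    rwa [add_sub_cancel_left, he, ← moveCursor_zpow_apply] at h
  simp only [Set.mem_insert_iff, Set.mem_singleton_iff, inv_eq_iff_eq_inv] at hs
  rcases hs with (rfl | rfl) | rfl | rfl
  · rw [lampPerm_la]
    exact lampCost_toggleAt_zero_le c
  · simpa [lampPerm_lt] using hcursor 1 abs_one
  · rw [map_inv, lampPerm_la, inv_eq_of_mul_eq_one_right (toggleAt_mul_self 0)]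
    exact lampCost_toggleAt_zero_le c
  · simpa [lampPerm_lt] using hcursor (-1) (by simp)

theorem wordLength_lampAt_mul_lampAt_mul_zpow {n j : ℕ} (hn : 0 < n) (hjn : j ≤ n) :
    wordLength {la 2, lt 2} (lampAt 2 (n + j) * lampAt 2 (j - n) * lt 2 ^ (j : ℤ)) =
      4 * n - j + 2 := by
  refine wordLength_eq_of_forall_le (List.replicate (n - j) (lt 2)⁻¹ ++ [la 2] ++
    List.replicate (2 * n) (lt 2) ++ [la 2] ++ List.replicate n (lt 2)⁻¹) ?_ ?_ ?_ ?_
  · intro s hs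
    simp only [List.mem_append, List.mem_replicate, List.mem_singleton] at hs
    rcases hs with (((⟨-, rfl⟩ | rfl) | ⟨-, rfl⟩) | rfl) | ⟨-, rfl⟩ <;> simp
  · simp only [List.length_append, List.length_replicate, List.length_singleton]
    omega
  · rw [shortened_word_prod _ _ hjn]
    exact congrArg (· * lt 2 ^ (j : ℤ)) (lampAt_commute 2 _ _).eq
  · intro l hl hprod
    have hcost := le_add_length_of_mul_le_add_one (fun g => lampCost (lampPerm g (∅, 0)))
      (fun s hs g => by simpa using lampCost_lampPerm_le hs (lampPerm g (∅, 0))) hl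
    rw [hprod, lampPerm_lampAt_mul_lampAt_mul_zpow_apply, map_one, Perm.one_apply,
      lampCost_empty_zero, show (j : ℤ) - (j - n) = n by ring,
      show (j : ℤ) - (n + j) = -n by ring,
      lampCost_symmDiff_pair (by omega) (by omega) (by omega)] at hcost
    rw [abs_of_nonneg (by positivity)] at hcost
    omega

/-- In `L₂` with generating set `{a, t}`, for `0 < j < n` the word
`tⁿ⁺ʲ a t⁻²ⁿ a tⁿ` is not geodesic: the element it represents has word length
`4n − j + 2 < 4n + j + 2`, realized by the word `t⁻ⁿ⁺ʲ a t²ⁿ a t⁻ⁿ`. -/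
theorem lamplighter_pumped_word_not_geodesic (n j : ℕ) (hj : 0 < j) (hjn : j < n) :
    letI S : Set (Lamp 2) := {la 2, lt 2}
    letI a := la 2
    letI t := lt 2
    letI w1 := List.replicate (n + j) t ++ [a] ++ List.replicate (2 * n) t⁻¹ ++ [a] ++
      List.replicate n t
    letI w2 := List.replicate (n - j) t⁻¹ ++ [a] ++ List.replicate (2 * n) t ++ [a] ++
      List.replicate n t⁻¹
    letI e := w1.prod
    wordLength S e = 4 * n - j + 2 ∧
    w2.prod = e ∧ w2.length = 4 * n - j + 2 ∧
    w1.length = 4 * n + j + 2 ∧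
    4 * n - j + 2 < 4 * n + j + 2 ∧
    w1.length ≠ wordLength S e := by
  simp only [pumped_word_prod, shortened_word_prod _ _ hjn.le, ← lampAt.eq_1,
    (lampAt_commute 2 (j - n) (n + j)).eq, List.length_append, List.length_replicate,
    List.length_singleton, wordLength_lampAt_mul_lampAt_mul_zpow (hj.trans hjn) hjn.le, true_and]
  omega
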